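/- The analytic metric identities hold: let x : ℝ³ → ℝ³ be twice continuously differentiable and define the metric terms J𝐚^i = (∂x/∂ξ^j) × (∂x/∂ξ^k) for each cyclic permutation (i, j, k) of (1, 2, 3). Then for each fixed component index n ∈ {1, 2, 3}, the divergence ∑_{i=1}^{3} ∂/∂ξ^i (J𝐚^i · ê_n) vanishes identically. -/

import Mathlib

/-- Partial derivative of `f : ℝ³ → ℝ` in direction `d`. -/
noncomputable def pd3 (d : Fin 3) (f : (Fin 3 → ℝ) → ℝ) (y : Fin 3 → ℝ) : ℝ :=
  deriv (fun s => f (Function.update y d s)) (y d)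

/-- Metric terms of a mapping `x : ℝ³ → ℝ³`: `J𝐚ⁱ = (∂x/∂ξʲ) × (∂x/∂ξᵏ)` with
`(i, j, k)` cyclic, i.e. `j = i + 1`, `k = i + 2` in `Fin 3`. -/
noncomputable def metricTerm (x : (Fin 3 → ℝ) → (Fin 3 → ℝ)) (i : Fin 3)
    (y : Fin 3 → ℝ) : Fin 3 → ℝ :=
  crossProduct (fun a => pd3 (i + 1) (fun z => x z a) y)
    (fun a => pd3 (i + 2) (fun z => x z a) y)

/-!
Component `n` of `J𝐚ⁱ` is component `i` of `∇x_{n+1} × ∇x_{n+2}`, so the metric identities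
say `div (∇g × ∇h) = 0` for `C²` functions `g, h`. By the product rule this divergence is a
cyclic (Levi-Civita) contraction of the Hessians of `g` and `h` against `∇h` and `∇g`, and
such a contraction of a symmetric matrix vanishes; the Hessians are symmetric by Schwarz.
-/

open scoped Matrix

theorem crossProduct_apply_cyclic {R : Type*} [CommRing R] (u v : Fin 3 → R) (n : Fin 3) :
    (u ⨯₃ v) n = u (n + 1) * v (n + 2) - u (n + 2) * v (n + 1) := by
  fin_cases n <;> simp [cross_apply]

theorem sum_cyclic_mul_sub_eq_zero_of_symm {R : Type*} [CommRing R] {A : Fin 3 → Fin 3 → R}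
    (hA : ∀ i j, A i j = A j i) (c : Fin 3 → R) :
    ∑ i, (A i (i + 1) * c (i + 2) - A i (i + 2) * c (i + 1)) = 0 := by
  simp only [Fin.sum_univ_three, Fin.isValue, Fin.reduceAdd, hA 1 0, hA 2 0, hA 2 1]
  ring

section PartialDerivatives

variable {f g : (Fin 3 → ℝ) → ℝ}

theorem hasDerivAt_pd3 {y : Fin 3 → ℝ} (d : Fin 3) (hf : DifferentiableAt ℝ f y) :
    HasDerivAt (fun s => f (Function.update y d s)) (fderiv ℝ f y (Pi.single d 1)) (y d) :=
  hf.hasFDerivAt.comp_hasDerivAt_of_eq _ (hasDerivAt_update y d (y d))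
    (Function.update_eq_self d y).symm

theorem pd3_eq_fderiv {y : Fin 3 → ℝ} (d : Fin 3) (hf : DifferentiableAt ℝ f y) :
    pd3 d f y = fderiv ℝ f y (Pi.single d 1) :=
  (hasDerivAt_pd3 d hf).deriv

theorem pd3_fun_eq_fderiv (hf : Differentiable ℝ f) (d : Fin 3) :
    (fun z => pd3 d f z) = fun z => fderiv ℝ f z (Pi.single d 1) :=
  funext fun z => pd3_eq_fderiv d (hf z)

theorem pd3_sub {y : Fin 3 → ℝ} (d : Fin 3) (hf : DifferentiableAt ℝ f y)
    (hg : DifferentiableAt ℝ g y) :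
    pd3 d (fun z => f z - g z) y = pd3 d f y - pd3 d g y := by
  rw [pd3_eq_fderiv d hf, pd3_eq_fderiv d hg]
  exact ((hasDerivAt_pd3 d hf).sub (hasDerivAt_pd3 d hg)).deriv

theorem pd3_mul {y : Fin 3 → ℝ} (d : Fin 3) (hf : DifferentiableAt ℝ f y)
    (hg : DifferentiableAt ℝ g y) :
    pd3 d (fun z => f z * g z) y = pd3 d f y * g y + f y * pd3 d g y := by
  have h := (hasDerivAt_pd3 d hf).mul (hasDerivAt_pd3 d hg)
  rw [Function.update_eq_self] at h
  rw [pd3_eq_fderiv d hf, pd3_eq_fderiv d hg]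
  exact h.deriv

theorem differentiable_pd3 (hf : ContDiff ℝ 2 f) (d : Fin 3) :
    Differentiable ℝ (fun z => pd3 d f z) := by
  rw [pd3_fun_eq_fderiv (hf.differentiable two_ne_zero)]
  exact ((hf.fderiv_right one_add_one_eq_two.le).differentiable one_ne_zero).clm_apply
    (differentiable_const _)

theorem pd3_pd3 (hf : ContDiff ℝ 2 f) (i j : Fin 3) (y : Fin 3 → ℝ) :
    pd3 i (fun z => pd3 j f z) y = fderiv ℝ (fderiv ℝ f) y (Pi.single i 1) (Pi.single j 1) := by
  have hDf : Differentiable ℝ (fderiv ℝ f) :=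
    (hf.fderiv_right one_add_one_eq_two.le).differentiable one_ne_zero
  rw [pd3_eq_fderiv i (differentiable_pd3 hf j y),
    pd3_fun_eq_fderiv (hf.differentiable two_ne_zero),
    fderiv_clm_apply (hDf y) (differentiableAt_const _)]
  simp

theorem pd3_pd3_comm (hf : ContDiff ℝ 2 f) (i j : Fin 3) (y : Fin 3 → ℝ) :
    pd3 i (fun z => pd3 j f z) y = pd3 j (fun z => pd3 i f z) y := by
  rw [pd3_pd3 hf, pd3_pd3 hf]
  exact hf.contDiffAt.isSymmSndFDerivAt (by simp) _ _

end PartialDerivatives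

noncomputable def grad3 (f : (Fin 3 → ℝ) → ℝ) (y : Fin 3 → ℝ) : Fin 3 → ℝ :=
  fun d => pd3 d f y

noncomputable def div3 (F : (Fin 3 → ℝ) → Fin 3 → ℝ) (y : Fin 3 → ℝ) : ℝ :=
  ∑ i, pd3 i (fun z => F z i) y

theorem div3_grad3_cross_grad3 {f g : (Fin 3 → ℝ) → ℝ} (hf : ContDiff ℝ 2 f)
    (hg : ContDiff ℝ 2 g) (y : Fin 3 → ℝ) :
    div3 (fun z => grad3 f z ⨯₃ grad3 g z) y = 0 := by
  have hf' := differentiable_pd3 hf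
  have hg' := differentiable_pd3 hg
  have product_rule : ∀ i : Fin 3, pd3 i (fun z => (grad3 f z ⨯₃ grad3 g z) i) y =
      (pd3 i (fun z => pd3 (i + 1) f z) y * grad3 g y (i + 2)
        - pd3 i (fun z => pd3 (i + 2) f z) y * grad3 g y (i + 1))
      - (pd3 i (fun z => pd3 (i + 1) g z) y * grad3 f y (i + 2)
        - pd3 i (fun z => pd3 (i + 2) g z) y * grad3 f y (i + 1)) := by
    intro i
    simp only [crossProduct_apply_cyclic, grad3]
    rw [pd3_sub i ((hf' _ y).fun_mul (hg' _ y)) ((hf' _ y).fun_mul (hg' _ y)),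
      pd3_mul i (hf' _ y) (hg' _ y), pd3_mul i (hf' _ y) (hg' _ y)]
    ring
  rw [div3, Finset.sum_congr rfl fun i _ => product_rule i, Finset.sum_sub_distrib,
    sum_cyclic_mul_sub_eq_zero_of_symm (pd3_pd3_comm hf · · y) (grad3 g y),
    sum_cyclic_mul_sub_eq_zero_of_symm (pd3_pd3_comm hg · · y) (grad3 f y), sub_zero]

theorem metricTerm_apply (x : (Fin 3 → ℝ) → (Fin 3 → ℝ)) (i n : Fin 3) (y : Fin 3 → ℝ) :
    metricTerm x i y n =
      (grad3 (fun z => x z (n + 1)) y ⨯₃ grad3 (fun z => x z (n + 2)) y) i := by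
  simp only [metricTerm, crossProduct_apply_cyclic, grad3]
  ring

theorem metric_identities (x : (Fin 3 → ℝ) → (Fin 3 → ℝ)) (hx : ContDiff ℝ 2 x) :
    ∀ n : Fin 3, ∀ y : Fin 3 → ℝ,
      (∑ i : Fin 3, pd3 i (fun z => metricTerm x i z n) y) = 0 := by
  intro n y
  simpa only [div3, metricTerm_apply] using
    div3_grad3_cross_grad3 (contDiff_pi.1 hx (n + 1)) (contDiff_pi.1 hx (n + 2)) y
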